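/- Let N ≥ 1, let u ∈ ℝ^N be a nonzero vector, let F : ℝ^N_{++} → ℝ^N_{++} be continuously differentiable, assume that F scales with exponent u, that F connects all variables, and that the monotonicity behavior of F is consistent with u, and set G := clog ∘ F ∘ cexp. Then for each z ∈ ℝ^N the eigenspace of the Jacobian matrix DG(z) for the eigenvalue 1 is one-dimensional and is spanned by u. -/

import Mathlib

/-!
Write `x = cexp z`. The chain rule gives `DG(z) = diag(F x)⁻¹ · DF(x) · diag(x)`, and
differentiating `F(c^u x) = c^u F(x)` at `c = 1` gives `DF(x)(u x) = u F(x)`; together,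
`DG(z) u = u`. Conjugating `DG(z)` by the `±1` diagonal matrix `S` of the partition `ζ_±`
gives a nonnegative matrix with the zero pattern of `DF(x)`, hence irreducible, with the
nonnegative fixed vector `S u`. For a nonnegative irreducible matrix a zero entry of a
nonnegative vector `w` with `B w ≤ w` propagates along the edges, so a nonzero such `w` is
positive. Hence any fixed vector `y` is a multiple of `v = S u`: for the largest `t` with
`y ≤ t v`, the vector `t v - y` is nonnegative, fixed and has a zero entry, so it vanishes.
Real and imaginary parts reduce the complex eigenspace to the real one.
-/

open Filter

/-- The positive orthant `ℝ^N_{++}`: vectors all of whose entries are strictly positive. -/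
def PosOrth (N : ℕ) : Set (Fin N → ℝ) := {x | ∀ i, 0 < x i}

/-- The Jacobian matrix of `F` at `x`: entry `(j, k)` is `∂F_j(x)/∂x_k`. -/
noncomputable def Jac {N : ℕ} (F : (Fin N → ℝ) → (Fin N → ℝ)) (x : Fin N → ℝ) :
    Matrix (Fin N) (Fin N) ℝ :=
  Matrix.of fun j k => fderiv ℝ F x (Pi.single k 1) j

/-- A matrix is irreducible if the directed graph on `Fin N` with an edge from `k` to `j`
whenever `M j k ≠ 0` is strongly connected. -/
def MatIrred {N : ℕ} (M : Matrix (Fin N) (Fin N) ℝ) : Prop :=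
  ∀ a b : Fin N, Relation.TransGen (fun k j => M j k ≠ 0) a b

/-- `pscale c u x = c^u x`, i.e. the vector with entries `c ^ (u i) * x i`. -/
noncomputable def pscale {N : ℕ} (c : ℝ) (u x : Fin N → ℝ) : Fin N → ℝ :=
  fun i => c ^ u i * x i

/-- The monotonicity behavior of `F` is consistent with `u`: there is a partition of the
index set into `ζ_+` (where `ζ = true`) and `ζ_-` (where `ζ = false`) such that `u` is
nonnegative on `ζ_+`, nonpositive on `ζ_-`, and on the positive orthant all partial
derivatives `∂F_j/∂x_k` are nonnegative when `j, k` lie in the same set of the partition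
and nonpositive otherwise. -/
def MonoConsistent {N : ℕ} (F : (Fin N → ℝ) → (Fin N → ℝ)) (u : Fin N → ℝ) : Prop :=
  ∃ ζ : Fin N → Bool,
    (∀ j, ζ j = true → 0 ≤ u j) ∧ (∀ j, ζ j = false → u j ≤ 0) ∧
    ∀ x ∈ PosOrth N, ∀ j k : Fin N,
      (ζ j = ζ k → 0 ≤ Jac F x j k) ∧ (ζ j ≠ ζ k → Jac F x j k ≤ 0)

/-- Componentwise natural logarithm `ℝ^N_{++} → ℝ^N`. -/
noncomputable def clog {N : ℕ} (x : Fin N → ℝ) : Fin N → ℝ := fun i => Real.log (x i)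

/-- Componentwise exponential `ℝ^N → ℝ^N_{++}`. -/
noncomputable def cexp {N : ℕ} (z : Fin N → ℝ) : Fin N → ℝ := fun i => Real.exp (z i)

open Matrix

namespace Matrix

variable {ι : Type*} [Fintype ι]

theorem eq_zero_of_transGen_of_mulVec_le {B : Matrix ι ι ℝ} (hB : ∀ j k, 0 ≤ B j k)
    {y : ι → ℝ} (hy : 0 ≤ y) (hBy : B *ᵥ y ≤ y) {a b : ι}
    (hab : Relation.TransGen (fun k j => B j k ≠ 0) a b) (hb : y b = 0) : y a = 0 := by
  have step : ∀ {k j}, B j k ≠ 0 → y j = 0 → y k = 0 := by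
    intro k j hjk hj
    have hterm : B j k * y k ≤ (B *ᵥ y) j :=
      Finset.single_le_sum (f := fun k => B j k * y k)
        (fun k _ => mul_nonneg (hB j k) (hy k)) (Finset.mem_univ k)
    have hBjk : 0 < B j k := (hB j k).lt_of_ne' hjk
    exact le_antisymm (nonpos_of_mul_nonpos_right (hterm.trans (hj ▸ hBy j)) hBjk) (hy k)
  induction hab with
  | single h => exact step h hb
  | tail _ h ih => exact ih (step h hb)

theorem pos_of_transGen_of_mulVec_le {B : Matrix ι ι ℝ} (hB : ∀ j k, 0 ≤ B j k)
    (hirr : ∀ a b, Relation.TransGen (fun k j => B j k ≠ 0) a b)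
    {v : ι → ℝ} (hv : 0 ≤ v) (hv0 : v ≠ 0) (hBv : B *ᵥ v ≤ v) (i : ι) : 0 < v i :=
  (hv i).lt_of_ne' fun hi =>
    hv0 (funext fun k => eq_zero_of_transGen_of_mulVec_le hB hv hBv (hirr k i) hi)

theorem exists_eq_smul_of_transGen_of_mulVec_eq_self {B : Matrix ι ι ℝ}
    (hB : ∀ j k, 0 ≤ B j k) (hirr : ∀ a b, Relation.TransGen (fun k j => B j k ≠ 0) a b)
    {v : ι → ℝ} (hv : 0 ≤ v) (hv0 : v ≠ 0) (hBv : B *ᵥ v = v)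
    {y : ι → ℝ} (hBy : B *ᵥ y = y) : ∃ t : ℝ, y = t • v := by
  have hpos := pos_of_transGen_of_mulVec_le hB hirr hv hv0 hBv.le
  obtain ⟨i, -⟩ := Function.ne_iff.1 hv0
  have : Nonempty ι := ⟨i⟩
  obtain ⟨i₀, hi₀⟩ := Finite.exists_max fun i => y i / v i
  set t := y i₀ / v i₀
  have hw : 0 ≤ t • v - y := fun i => by
    have := (div_le_iff₀ (hpos i)).1 (hi₀ i)
    simp only [Pi.zero_apply, Pi.sub_apply, Pi.smul_apply, smul_eq_mul]
    linarith
  have hBw : B *ᵥ (t • v - y) = t • v - y := by rw [mulVec_sub, mulVec_smul, hBv, hBy]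
  have hw₀ : (t • v - y) i₀ = 0 := by
    simp [t, div_mul_cancel₀ _ (hpos i₀).ne']
  refine ⟨t, funext fun i => ?_⟩
  have := eq_zero_of_transGen_of_mulVec_le hB hw hBw.le (hirr i i₀) hw₀
  simpa [sub_eq_zero, eq_comm] using this

theorem exists_eq_smul_of_conj_transGen [DecidableEq ι] {A S : Matrix ι ι ℝ} (hS : S * S = 1)
    (hB : ∀ j k, 0 ≤ (S * A * S) j k)
    (hirr : ∀ a b, Relation.TransGen (fun k j => (S * A * S) j k ≠ 0) a b)
    {u : ι → ℝ} (hu : 0 ≤ S *ᵥ u) (hu0 : u ≠ 0) (hAu : A *ᵥ u = u)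
    {y : ι → ℝ} (hAy : A *ᵥ y = y) : ∃ t : ℝ, y = t • u := by
  have hSS : ∀ w, S *ᵥ (S *ᵥ w) = w := fun w => by rw [mulVec_mulVec, hS, one_mulVec]
  have hfix : ∀ {w}, A *ᵥ w = w → (S * A * S) *ᵥ (S *ᵥ w) = S *ᵥ w := fun hw => by
    rw [← mulVec_mulVec, ← mulVec_mulVec, hSS, hw]
  have hSu : S *ᵥ u ≠ 0 := fun h => hu0 (by rw [← hSS u, h, mulVec_zero])
  obtain ⟨t, ht⟩ := exists_eq_smul_of_transGen_of_mulVec_eq_self hB hirr hu hSu (hfix hAu)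
    (hfix hAy)
  exact ⟨t, by rw [← hSS y, ht, mulVec_smul, hSS]⟩

theorem re_map_ofReal_mulVec (A : Matrix ι ι ℝ) (w : ι → ℂ) (j : ι) :
    ((A.map Complex.ofReal *ᵥ w) j).re = (A *ᵥ fun k => (w k).re) j := by
  simp [mulVec, dotProduct, Complex.re_sum]

theorem im_map_ofReal_mulVec (A : Matrix ι ι ℝ) (w : ι → ℂ) (j : ι) :
    ((A.map Complex.ofReal *ᵥ w) j).im = (A *ᵥ fun k => (w k).im) j := by
  simp [mulVec, dotProduct, Complex.im_sum]

theorem eigenspace_map_ofReal_one_eq_span [DecidableEq ι] {A : Matrix ι ι ℝ} {u : ι → ℝ}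
    (hAu : A *ᵥ u = u) (hfix : ∀ y, A *ᵥ y = y → ∃ t : ℝ, y = t • u) :
    Module.End.eigenspace (toLin' (A.map Complex.ofReal)) 1 =
      Submodule.span ℂ {fun i => (u i : ℂ)} := by
  ext w
  rw [Module.End.mem_eigenspace_iff, toLin'_apply, one_smul, Submodule.mem_span_singleton]
  constructor
  · intro hw
    obtain ⟨s, hs⟩ := hfix _ (funext fun j => by rw [← re_map_ofReal_mulVec, hw])
    obtain ⟨t, ht⟩ := hfix _ (funext fun j => by rw [← im_map_ofReal_mulVec, hw])
    refine ⟨s + t * Complex.I, funext fun i => Complex.ext ?_ ?_⟩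
    · simpa using (congrFun hs i).symm
    · simpa using (congrFun ht i).symm
  · rintro ⟨c, rfl⟩
    rw [mulVec_smul]
    congr 1
    funext j
    exact (RingHom.map_mulVec Complex.ofRealHom A u j).symm.trans
      (congrArg _ (congrFun hAu j))

end Matrix

section SignPattern

variable {ι : Type*}

def signVec (ζ : ι → Bool) : ι → ℝ := fun i => if ζ i then 1 else -1

theorem signVec_mul_self (ζ : ι → Bool) (i : ι) : signVec ζ i * signVec ζ i = 1 := by
  unfold signVec; split_ifs <;> norm_num

theorem diagonal_signVec_mul_self [Fintype ι] [DecidableEq ι] (ζ : ι → Bool) :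
    diagonal (signVec ζ) * diagonal (signVec ζ) = 1 := by
  rw [diagonal_mul_diagonal, ← diagonal_one]
  exact congrArg diagonal (funext (signVec_mul_self ζ))

theorem signVec_mul_nonneg {ζ : ι → Bool} {u : ι → ℝ} (hpos : ∀ j, ζ j = true → 0 ≤ u j)
    (hneg : ∀ j, ζ j = false → u j ≤ 0) (j : ι) : 0 ≤ signVec ζ j * u j := by
  unfold signVec
  cases h : ζ j
  · simpa using hneg j h
  · simpa using hpos j h

theorem signVec_mul_mul_signVec_nonneg {ζ : ι → Bool} {a : ℝ} {j k : ι}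
    (ha : (ζ j = ζ k → 0 ≤ a) ∧ (ζ j ≠ ζ k → a ≤ 0)) :
    0 ≤ signVec ζ j * a * signVec ζ k := by
  unfold signVec
  cases hj : ζ j <;> cases hk : ζ k <;> simp_all

theorem exists_eq_smul_of_signPattern [Fintype ι] [DecidableEq ι] {M : Matrix ι ι ℝ}
    {ζ : ι → Bool} {a b : ι → ℝ}
    (ha : ∀ i, 0 < a i) (hb : ∀ i, 0 < b i)
    (hM : ∀ j k, (ζ j = ζ k → 0 ≤ M j k) ∧ (ζ j ≠ ζ k → M j k ≤ 0))
    (hirr : ∀ i j, Relation.TransGen (fun k j => |M j k| ≠ 0) i j)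
    {u : ι → ℝ} (hu : ∀ j, 0 ≤ signVec ζ j * u j) (hu0 : u ≠ 0)
    (hAu : (diagonal a * M * diagonal b) *ᵥ u = u)
    {y : ι → ℝ} (hAy : (diagonal a * M * diagonal b) *ᵥ y = y) : ∃ t : ℝ, y = t • u := by
  set S := diagonal (signVec ζ)
  have hentry : ∀ j k, (S * (diagonal a * M * diagonal b) * S) j k =
      a j * b k * (signVec ζ j * M j k * signVec ζ k) := fun j k => by
    simp only [S, diagonal_mul, mul_diagonal]; ring
  have hsign_ne : ∀ i, signVec ζ i ≠ 0 := fun i h => by simpa [h] using signVec_mul_self ζ i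
  refine exists_eq_smul_of_conj_transGen (S := S) (diagonal_signVec_mul_self ζ) (fun j k => ?_)
    (fun i j => Relation.TransGen.mono (fun k j hkj => ?_) i j (hirr i j)) (fun j => ?_)
    hu0 hAu hAy
  · rw [hentry]
    exact mul_nonneg (mul_pos (ha j) (hb k)).le (signVec_mul_mul_signVec_nonneg (hM j k))
  · rw [hentry]
    exact mul_ne_zero (mul_pos (ha j) (hb k)).ne'
      (mul_ne_zero (mul_ne_zero (hsign_ne j) (abs_ne_zero.1 hkj)) (hsign_ne k))
  · simpa [S, mulVec_diagonal] using hu j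

end SignPattern

theorem isOpen_posOrth (N : ℕ) : IsOpen (PosOrth N) := by
  simpa only [PosOrth, Set.ofPred_forall] using
    isOpen_iInter_of_finite fun i => isOpen_lt continuous_const (continuous_apply i)

theorem HasFDerivAt.jac_eq {N : ℕ} {F : (Fin N → ℝ) → (Fin N → ℝ)}
    {F' : (Fin N → ℝ) →L[ℝ] (Fin N → ℝ)} {x : Fin N → ℝ} (h : HasFDerivAt F F' x) :
    Jac F x = LinearMap.toMatrix' (F' : (Fin N → ℝ) →ₗ[ℝ] (Fin N → ℝ)) := by
  ext j k
  simp [Jac, h.fderiv, LinearMap.toMatrix'_apply]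

theorem hasFDerivAt_pi_map_diagonal {ι : Type*} [Fintype ι] [DecidableEq ι] {f : ℝ → ℝ}
    {f' z : ι → ℝ} (hf : ∀ i, HasDerivAt f (f' i) (z i)) :
    HasFDerivAt (fun y i => f (y i))
      (LinearMap.toContinuousLinearMap (toLin' (diagonal f'))) z := by
  refine hasFDerivAt_pi'.2 fun i =>
    ((hf i).comp_hasFDerivAt z (hasFDerivAt_apply (𝕜 := ℝ) i z)).congr_fderiv ?_
  ext y
  simp [mulVec_diagonal]

theorem jac_clog_comp_comp_cexp {N : ℕ} {F : (Fin N → ℝ) → (Fin N → ℝ)} {z : Fin N → ℝ}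
    (hF : DifferentiableAt ℝ F (cexp z)) (hpos : F (cexp z) ∈ PosOrth N) :
    Jac (clog ∘ F ∘ cexp) z =
      diagonal (F (cexp z))⁻¹ * Jac F (cexp z) * diagonal (cexp z) := by
  have hexp : HasFDerivAt cexp _ z :=
    hasFDerivAt_pi_map_diagonal (f := Real.exp) (f' := cexp z) fun i =>
      Real.hasDerivAt_exp (z i)
  have hlog : HasFDerivAt clog _ (F (cexp z)) :=
    hasFDerivAt_pi_map_diagonal (f := Real.log) (f' := (F (cexp z))⁻¹)
      fun i => Real.hasDerivAt_log (hpos i).ne'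
  rw [(hlog.comp z (hF.hasFDerivAt.comp z hexp)).jac_eq, hF.hasFDerivAt.jac_eq]
  simp [LinearMap.toMatrix'_comp, mul_assoc]

theorem jac_mulVec_of_pscale {N : ℕ} {F : (Fin N → ℝ) → (Fin N → ℝ)} {u x : Fin N → ℝ}
    (hF : DifferentiableAt ℝ F x)
    (hscale : ∀ c : ℝ, 0 < c → F (pscale c u x) = pscale c u (F x)) :
    Jac F x *ᵥ (u * x) = u * F x := by
  have hcurve : ∀ w, HasDerivAt (fun c : ℝ => pscale c u w) (u * w) 1 := fun w => by
    refine hasDerivAt_pi.2 fun k => ?_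
    simpa [pscale] using
      (Real.hasDerivAt_rpow_const (x := 1) (p := u k) (Or.inl one_ne_zero)).mul_const (w k)
  have hlhs : HasDerivAt (fun c => F (pscale c u x)) (fderiv ℝ F x (u * x)) 1 :=
    hF.hasFDerivAt.comp_hasDerivAt_of_eq 1 (hcurve x) (by funext i; simp [pscale])
  have hrhs : HasDerivAt (fun c => pscale c u (F x)) (fderiv ℝ F x (u * x)) 1 :=
    hlhs.congr_of_eventuallyEq <| by
      filter_upwards [eventually_gt_nhds zero_lt_one] with c hc using (hscale c hc).symm
  rw [hF.hasFDerivAt.jac_eq, LinearMap.toMatrix'_mulVec]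
  exact ((hcurve (F x)).unique hrhs).symm

theorem jac_clog_comp_comp_cexp_mulVec_self {N : ℕ} {F : (Fin N → ℝ) → (Fin N → ℝ)}
    {u z : Fin N → ℝ} (hF : DifferentiableAt ℝ F (cexp z)) (hpos : F (cexp z) ∈ PosOrth N)
    (hscale : ∀ c : ℝ, 0 < c → F (pscale c u (cexp z)) = pscale c u (F (cexp z))) :
    Jac (clog ∘ F ∘ cexp) z *ᵥ u = u := by
  have hdiag : diagonal (cexp z) *ᵥ u = u * cexp z := by
    funext i; simp [mulVec_diagonal, mul_comm]
  rw [jac_clog_comp_comp_cexp hF hpos, ← mulVec_mulVec, ← mulVec_mulVec, hdiag,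
    jac_mulVec_of_pscale hF hscale]
  funext i
  simp only [mulVec_diagonal, Pi.inv_apply, Pi.mul_apply]
  field_simp [(hpos i).ne']

theorem eigenspace_of_log_jacobian_general
    {N : ℕ} (u : Fin N → ℝ) (hu : u ≠ 0)
    (F : (Fin N → ℝ) → (Fin N → ℝ))
    (hmap : ∀ x ∈ PosOrth N, F x ∈ PosOrth N)
    (hC1 : ContDiffOn ℝ 1 F (PosOrth N))
    (hscale : ∀ x ∈ PosOrth N, ∀ c : ℝ, 0 < c → F (pscale c u x) = pscale c u (F x))
    (hconn : ∀ x ∈ PosOrth N, MatIrred (Matrix.of fun j k => |Jac F x j k|))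
    (hmono : MonoConsistent F u)
    (G : (Fin N → ℝ) → (Fin N → ℝ)) (hG : G = clog ∘ F ∘ cexp) :
    ∀ z : Fin N → ℝ,
      Module.End.eigenspace (Matrix.toLin' ((Jac G z).map Complex.ofReal)) 1 =
        Submodule.span ℂ {fun i => (u i : ℂ)} ∧
      Module.finrank ℂ
        (Module.End.eigenspace (Matrix.toLin' ((Jac G z).map Complex.ofReal)) 1) = 1 := by
  obtain ⟨ζ, hζ_pos, hζ_neg, hζ_jac⟩ := hmono
  intro z
  subst hG
  have hx : cexp z ∈ PosOrth N := fun i => Real.exp_pos (z i)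
  have hFx := hmap _ hx
  have hF : DifferentiableAt ℝ F (cexp z) :=
    (hC1.differentiableOn one_ne_zero).differentiableAt ((isOpen_posOrth N).mem_nhds hx)
  have hfix := jac_clog_comp_comp_cexp_mulVec_self hF hFx (hscale _ hx)
  have hspan : ∀ y, Jac (clog ∘ F ∘ cexp) z *ᵥ y = y → ∃ t : ℝ, y = t • u := by
    rw [jac_clog_comp_comp_cexp hF hFx] at hfix ⊢
    exact fun y => exists_eq_smul_of_signPattern (fun j => inv_pos.2 (hFx j)) hx
      (hζ_jac _ hx) (hconn _ hx) (signVec_mul_nonneg hζ_pos hζ_neg) hu hfix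
  have heig := eigenspace_map_ofReal_one_eq_span hfix hspan
  refine ⟨heig, heig ▸ finrank_span_singleton fun h => hu (funext fun i => ?_)⟩
  simpa using congrFun h i

/-- If `u ≠ 0`, `F : ℝ^N_{++} → ℝ^N_{++}` is continuously differentiable, scales with
exponent `u`, connects all variables, and its monotonicity behavior is consistent with
`u`, then for each `z ∈ ℝ^N` the eigenspace of the Jacobian `DG(z)` of
`G := clog ∘ F ∘ cexp` for the eigenvalue `1` is one-dimensional and spanned by `u`. -/
theorem eigenspace_of_log_jacobian
    {N : ℕ} (hN : 1 ≤ N) (u : Fin N → ℝ) (hu : u ≠ 0)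
    (F : (Fin N → ℝ) → (Fin N → ℝ))
    (hmap : ∀ x ∈ PosOrth N, F x ∈ PosOrth N)
    (hC1 : ContDiffOn ℝ 1 F (PosOrth N))
    (hscale : ∀ x ∈ PosOrth N, ∀ c : ℝ, 0 < c → F (pscale c u x) = pscale c u (F x))
    (hconn : ∀ x ∈ PosOrth N, MatIrred (Matrix.of fun j k => |Jac F x j k|))
    (hmono : MonoConsistent F u)
    (G : (Fin N → ℝ) → (Fin N → ℝ)) (hG : G = clog ∘ F ∘ cexp) :
    ∀ z : Fin N → ℝ,
      Module.End.eigenspace (Matrix.toLin' ((Jac G z).map Complex.ofReal)) 1 =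
        Submodule.span ℂ {fun i => (u i : ℂ)} ∧
      Module.finrank ℂ
        (Module.End.eigenspace (Matrix.toLin' ((Jac G z).map Complex.ofReal)) 1) = 1 :=
  eigenspace_of_log_jacobian_general u hu F hmap hC1 hscale hconn hmono G hG
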